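/- arXiv:2406.09789 — 2 statements merged into one kernel-verified Lean document; each statement's English description precedes it below -/
import Mathlib

section
/- Let T be a compact self-adjoint positive operator on a separable Hilbert space H with eigenpairs (λᵢ, φᵢ), λᵢ > 0 nonincreasing. Suppose u¹⁰, …, u^{N,0} ∈ H are such that the N×N matrix (⟨u^{j,0}, φᵢ⟩)_{1≤i,j≤N} is invertible, and λ_N > λ_{N+1}. Then the sequence of subspaces Uₙ := span{Tⁿ u^{1,0}, …, Tⁿ u^{N,0}} converges to span{φ₁, …, φ_N}, in the sense that the orthogonal projection onto Uₙ converges in operator norm to the orthogonal projection onto span{φ₁, …, φ_N}. -/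
open scoped RealInnerProductSpace
open Filter

/-- The orthogonal projection of a Hilbert space onto a finite-dimensional
subspace, viewed as a continuous linear endomorphism. -/
noncomputable def orthProjCLM {H : Type*} [NormedAddCommGroup H] [InnerProductSpace ℝ H]
    (U : Submodule ℝ H) (hU : FiniteDimensional ℝ U) : H →L[ℝ] H :=
  haveI := hU
  U.subtypeL.comp (U.orthogonalProjection)

section Aux
variable {H : Type*} [NormedAddCommGroup H] [InnerProductSpace ℝ H]
variable {H : Type*} [NormedAddCommGroup H] [InnerProductSpace ℝ H]
open Submodule

lemma dist_orthProj_le (U : Submodule ℝ H) [HasOrthogonalProjection U] (y : H) (u : H)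
    (hu : u ∈ U) : ‖y - orthogonalProjection U y‖ ≤ ‖y - u‖ := by
  rw [show (orthogonalProjection U y : H) = U.starProjection y from rfl, starProjection_minimal]
  exact ciInf_le ⟨0, fun b hb => by obtain ⟨x, rfl⟩ := hb; positivity⟩ (⟨u, hu⟩ : U)

lemma norm_orthProj_le (U : Submodule ℝ H) [HasOrthogonalProjection U] (y : H) :
    ‖(orthogonalProjection U y : H)‖ ≤ ‖y‖ := by
  have h := orthogonalProjection_norm_le U
  calc ‖(orthogonalProjection U y : H)‖ = ‖orthogonalProjection U y‖ := rfl
    _ ≤ ‖orthogonalProjection U‖ * ‖y‖ := (orthogonalProjection U).le_opNorm y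
    _ ≤ 1 * ‖y‖ := by gcongr
    _ = ‖y‖ := one_mul _

lemma proj_diff_norm_le (U V : Submodule ℝ H) [HasOrthogonalProjection U]
    [HasOrthogonalProjection V] (δ : ℝ) (hδ : 0 ≤ δ)
    (hUV : ∀ u ∈ U, ‖u - (orthogonalProjection V u : H)‖ ≤ δ * ‖u‖)
    (hVU : ∀ v ∈ V, ‖v - (orthogonalProjection U v : H)‖ ≤ δ * ‖v‖) :
    ‖U.subtypeL.comp (orthogonalProjection U) - V.subtypeL.comp (orthogonalProjection V)‖
      ≤ 2 * δ := by
  apply ContinuousLinearMap.opNorm_le_bound _ (by positivity)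
  intro y
  set Pu : H := (orthogonalProjection U y : H) with hPu
  set z : H := y - Pu with hz
  have hPuU : Pu ∈ U := (orthogonalProjection U y).2
  have hzperp : z ∈ Uᗮ := sub_starProjection_mem_orthogonal y
  have hPUz : (orthogonalProjection U z : H) = 0 := by
    rw [orthogonalProjection_mem_subspace_orthogonalComplement_eq_zero hzperp]
    rfl
  set q : H := (orthogonalProjection V z : H) with hq
  have hqV : q ∈ V := (orthogonalProjection V z).2
  -- ‖q‖² = ⟪q, z⟫
  have h1 : ‖q‖ ^ 2 = ⟪q, z⟫ := by
    have horth : ⟪q, z - q⟫ = 0 :=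
      Submodule.inner_right_of_mem_orthogonal hqV
        (sub_starProjection_mem_orthogonal z)
    have : ⟪q, z⟫ = ⟪q, q⟫ + ⟪q, z - q⟫ := by rw [← inner_add_right, add_sub_cancel]
    rw [this, horth, real_inner_self_eq_norm_sq]; ring
  have h2 : ⟪(orthogonalProjection U q : H), z⟫ = 0 := by
    calc _ = ⟪q, U.starProjection z⟫ := inner_starProjection_left_eq_right U q z
      _ = 0 := by rw [show U.starProjection z = 0 from hPUz, inner_zero_right]
  have h3 : ‖q‖ ^ 2 ≤ δ * ‖q‖ * ‖z‖ := by
    have : ‖q‖ ^ 2 = ⟪q - (orthogonalProjection U q : H), z⟫ := by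
      rw [inner_sub_left, h2, h1]; ring
    calc ‖q‖ ^ 2 = ⟪q - (orthogonalProjection U q : H), z⟫ := this
      _ ≤ ‖q - (orthogonalProjection U q : H)‖ * ‖z‖ := real_inner_le_norm _ _
      _ ≤ (δ * ‖q‖) * ‖z‖ := by gcongr; exact hVU q hqV
      _ = δ * ‖q‖ * ‖z‖ := by ring
  have hznorm : ‖z‖ ≤ ‖y‖ := by
    have := dist_orthProj_le U y 0 U.zero_mem
    simp at this; exact this
  have hqle : ‖q‖ ≤ δ * ‖z‖ := by
    rcases eq_or_lt_of_le (norm_nonneg q) with h | h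
    · rw [← h]; positivity
    · nlinarith
  have hdecomp :
      (U.subtypeL.comp (orthogonalProjection U) - V.subtypeL.comp (orthogonalProjection V)) y
        = (Pu - (orthogonalProjection V Pu : H)) - q := by
    have hy : y = Pu + z := by rw [hz]; abel
    have : (orthogonalProjection V y : H)
        = (orthogonalProjection V Pu : H) + (orthogonalProjection V z : H) := by
      conv_lhs => rw [hy]
      rw [map_add]; rfl
    simp only [ContinuousLinearMap.sub_apply, ContinuousLinearMap.comp_apply,
      Submodule.subtypeL_apply, this]
    abel
  rw [hdecomp]
  calc ‖(Pu - (orthogonalProjection V Pu : H)) - q‖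
      ≤ ‖Pu - (orthogonalProjection V Pu : H)‖ + ‖q‖ := norm_sub_le _ _
    _ ≤ δ * ‖Pu‖ + δ * ‖z‖ := add_le_add (hUV Pu hPuU) hqle
    _ ≤ δ * ‖y‖ + δ * ‖y‖ := by
        gcongr <;> first
          | exact norm_orthProj_le U y
          | exact hznorm
    _ = 2 * δ * ‖y‖ := by ring

lemma sum_abs_le_sqrt (N : ℕ) (c : Fin N → ℝ) :
    ∑ j, |c j| ≤ Real.sqrt N * Real.sqrt (∑ j, c j ^ 2) := by
  have h := Finset.sum_mul_sq_le_sq_mul_sq Finset.univ (fun _ : Fin N => (1 : ℝ))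
    (fun j => |c j|)
  have h2 : (∑ j, |c j|) ^ 2 ≤ (N : ℝ) * ∑ j, c j ^ 2 := by
    simpa [sq_abs] using h
  have hnn : 0 ≤ ∑ j, |c j| := Finset.sum_nonneg fun _ _ => abs_nonneg _
  calc ∑ j, |c j| = Real.sqrt ((∑ j, |c j|) ^ 2) := (Real.sqrt_sq hnn).symm
    _ ≤ Real.sqrt ((N : ℝ) * ∑ j, c j ^ 2) := Real.sqrt_le_sqrt h2
    _ = _ := Real.sqrt_mul (Nat.cast_nonneg N) _

lemma comb_diff_le {N : ℕ} {x f : Fin N → H} {ε : ℝ} (hx : ∀ j, ‖x j - f j‖ ≤ ε)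
    (c : Fin N → ℝ) :
    ‖∑ j, c j • x j - ∑ j, c j • f j‖ ≤ ε * ∑ j, |c j| := by
  rw [← Finset.sum_sub_distrib]
  calc ‖∑ j, (c j • x j - c j • f j)‖ ≤ ∑ j, ‖c j • x j - c j • f j‖ := norm_sum_le _ _
    _ = ∑ j, |c j| * ‖x j - f j‖ := by
        simp only [← smul_sub, norm_smul, Real.norm_eq_abs]
    _ ≤ ∑ j, |c j| * ε :=
        Finset.sum_le_sum fun j _ => mul_le_mul_of_nonneg_left (hx j) (abs_nonneg _)
    _ = ε * ∑ j, |c j| := by rw [← Finset.sum_mul]; ring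

lemma norm_comb {N : ℕ} {f : Fin N → H} (hf : Orthonormal ℝ f) (c : Fin N → ℝ) :
    ‖∑ j, c j • f j‖ = Real.sqrt (∑ j, c j ^ 2) := by
  have h : ⟪∑ j, c j • f j, ∑ j, c j • f j⟫ = ∑ j, c j * c j := by
    simpa using hf.inner_sum c c Finset.univ
  rw [← Real.sqrt_sq (norm_nonneg _), ← real_inner_self_eq_norm_sq, h]
  congr 1
  exact Finset.sum_congr rfl fun j _ => (sq (c j)).symm

lemma geometry {N : ℕ} {f x : Fin N → H} (hf : Orthonormal ℝ f) {ε : ℝ} (hε : 0 ≤ ε)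
    (hx : ∀ j, ‖x j - f j‖ ≤ ε) (hsmall : Real.sqrt N * ε ≤ 1 / 2)
    [HasOrthogonalProjection (Submodule.span ℝ (Set.range x))]
    [HasOrthogonalProjection (Submodule.span ℝ (Set.range f))] :
    ‖(Submodule.span ℝ (Set.range x)).subtypeL.comp
        (orthogonalProjection (Submodule.span ℝ (Set.range x))) -
      (Submodule.span ℝ (Set.range f)).subtypeL.comp
        (orthogonalProjection (Submodule.span ℝ (Set.range f)))‖
      ≤ 4 * (Real.sqrt N * ε) := by
  have hδ : (0 : ℝ) ≤ 2 * (Real.sqrt N * ε) := by positivity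
  have hmemf : ∀ c : Fin N → ℝ, (∑ j, c j • f j) ∈ Submodule.span ℝ (Set.range f) :=
    fun c => Submodule.sum_smul_mem _ _ fun j _ => Submodule.subset_span ⟨j, rfl⟩
  have hmemx : ∀ c : Fin N → ℝ, (∑ j, c j • x j) ∈ Submodule.span ℝ (Set.range x) :=
    fun c => Submodule.sum_smul_mem _ _ fun j _ => Submodule.subset_span ⟨j, rfl⟩
  have key := proj_diff_norm_le (Submodule.span ℝ (Set.range x))
      (Submodule.span ℝ (Set.range f)) (2 * (Real.sqrt N * ε)) hδ ?_ ?_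
  · calc _ ≤ 2 * (2 * (Real.sqrt N * ε)) := key
      _ = 4 * (Real.sqrt N * ε) := by ring
  · -- u ∈ span x
    intro u hu
    obtain ⟨c, rfl⟩ := (mem_span_range_iff_exists_fun ℝ).1 hu
    set s := Real.sqrt (∑ j, c j ^ 2) with hs_def
    have hs : 0 ≤ s := Real.sqrt_nonneg _
    have h1 : ‖∑ j, c j • f j‖ = s := norm_comb hf c
    have h2 : ‖∑ j, c j • x j - ∑ j, c j • f j‖ ≤ Real.sqrt N * ε * s := by
      calc ‖∑ j, c j • x j - ∑ j, c j • f j‖ ≤ ε * ∑ j, |c j| := comb_diff_le hx c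
        _ ≤ ε * (Real.sqrt N * s) := by
            have := sum_abs_le_sqrt N c
            exact mul_le_mul_of_nonneg_left this hε
        _ = Real.sqrt N * ε * s := by ring
    have hεs : Real.sqrt N * ε * s ≤ s / 2 := by
      have := mul_le_mul_of_nonneg_right hsmall hs
      linarith
    have h3 : s ≤ 2 * ‖∑ j, c j • x j‖ := by
      have hlow : ‖∑ j, c j • f j‖ - ‖∑ j, c j • f j - ∑ j, c j • x j‖
          ≤ ‖∑ j, c j • x j‖ := by
        have := norm_sub_norm_le (∑ j, c j • f j) (∑ j, c j • x j)
        linarith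
      rw [norm_sub_rev] at hlow
      rw [h1] at hlow
      linarith
    calc ‖(∑ j, c j • x j) -
          (orthogonalProjection (Submodule.span ℝ (Set.range f)) (∑ j, c j • x j) : H)‖
        ≤ ‖∑ j, c j • x j - ∑ j, c j • f j‖ := dist_orthProj_le _ _ _ (hmemf c)
      _ ≤ Real.sqrt N * ε * s := h2
      _ ≤ Real.sqrt N * ε * (2 * ‖∑ j, c j • x j‖) := by
          apply mul_le_mul_of_nonneg_left h3; positivity
      _ = 2 * (Real.sqrt N * ε) * ‖∑ j, c j • x j‖ := by ring
  · intro v hv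
    obtain ⟨c, rfl⟩ := (mem_span_range_iff_exists_fun ℝ).1 hv
    set s := Real.sqrt (∑ j, c j ^ 2) with hs_def
    have h1 : ‖∑ j, c j • f j‖ = s := norm_comb hf c
    calc ‖(∑ j, c j • f j) -
          (orthogonalProjection (Submodule.span ℝ (Set.range x)) (∑ j, c j • f j) : H)‖
        ≤ ‖∑ j, c j • f j - ∑ j, c j • x j‖ := dist_orthProj_le _ _ _ (hmemx c)
      _ = ‖∑ j, c j • x j - ∑ j, c j • f j‖ := norm_sub_rev _ _
      _ ≤ ε * ∑ j, |c j| := comb_diff_le hx c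
      _ ≤ ε * (Real.sqrt N * s) := mul_le_mul_of_nonneg_left (sum_abs_le_sqrt N c) hε
      _ = Real.sqrt N * ε * s := by ring
      _ ≤ 2 * (Real.sqrt N * ε) * s := by
          apply mul_le_mul_of_nonneg_right _ (Real.sqrt_nonneg _)
          nlinarith [Real.sqrt_nonneg (N : ℝ)]
      _ = 2 * (Real.sqrt N * ε) * ‖∑ j, c j • f j‖ := by rw [h1]


lemma orthProjCLM_congr {A B : Submodule ℝ H} (h : A = B)
    (hA : FiniteDimensional ℝ A) (hB : FiniteDimensional ℝ B) :
    orthProjCLM A hA = orthProjCLM B hB := by subst h; rfl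

end Aux

/-- convergence of subspace iteration: the subspaces spanned by the
power iterates of `N` initial vectors converge (in the sense of operator-norm
convergence of the orthogonal projections) to the span of the first `N`
eigenvectors. -/
theorem stmt_4 {H : Type*} [NormedAddCommGroup H] [InnerProductSpace ℝ H] [CompleteSpace H]
    (T : H →L[ℝ] H) (hcompact : IsCompactOperator T)
    (hsa : ∀ x y : H, ⟪T x, y⟫ = ⟪x, T y⟫) (hinj : Function.Injective T)
    (φ : HilbertBasis ℕ ℝ H) (lam : ℕ → ℝ)
    (heig : ∀ i, T (φ i) = lam i • φ i)
    (hpos : ∀ i, 0 < lam i) (hmono : Antitone lam)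
    (N : ℕ) (u : Fin N → H)
    (hrank : IsUnit (Matrix.of fun i j : Fin N => ⟪u j, φ i⟫))
    (hgap : lam N < lam (N - 1))
    (U : ℕ → Submodule ℝ H)
    (hU : ∀ n, U n = Submodule.span ℝ (Set.range fun j : Fin N => (T ^ n) (u j)))
    (hUfd : ∀ n, FiniteDimensional ℝ (U n))
    (V : Submodule ℝ H)
    (hV : V = Submodule.span ℝ (Set.range fun i : Fin N => φ i))
    (hVfd : FiniteDimensional ℝ V) :
    Tendsto (fun n : ℕ => orthProjCLM (U n) (hUfd n)) atTop
      (nhds (orthProjCLM V hVfd)) := by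
  -- matrix inverse
  set cM : Matrix (Fin N) (Fin N) ℝ := Matrix.of fun i j : Fin N => ⟪u j, φ i⟫ with hcM
  have hdet : IsUnit cM.det := (Matrix.isUnit_iff_isUnit_det cM).1 hrank
  have hmulinv : cM * cM⁻¹ = 1 := Matrix.mul_nonsing_inv cM hdet
  have hinvmul : cM⁻¹ * cM = 1 := Matrix.nonsing_inv_mul cM hdet
  -- the preconditioned vectors
  set w : Fin N → H := fun j => ∑ k, cM⁻¹ k j • u k with hw
  have hwinner : ∀ (j i : Fin N), ⟪w j, φ (i : ℕ)⟫ = if i = j then 1 else 0 := by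
    intro j i
    have : ⟪w j, φ (i : ℕ)⟫ = ∑ k, cM i k * cM⁻¹ k j := by
      rw [hw]
      rw [sum_inner]
      refine Finset.sum_congr rfl fun k _ => ?_
      rw [real_inner_smul_left]
      ring_nf
      rfl
    rw [this, ← Matrix.mul_apply, hmulinv, Matrix.one_apply]
  have hu_eq : ∀ j, u j = ∑ k, cM k j • w k := by
    intro j
    calc u j = ∑ m, ((cM⁻¹ * cM) m j) • u m := by
          rw [hinvmul]
          simp [Matrix.one_apply]
      _ = ∑ m, ∑ k, (cM k j * cM⁻¹ m k) • u m := by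
          refine Finset.sum_congr rfl fun m _ => ?_
          rw [Matrix.mul_apply, Finset.sum_smul]
          refine Finset.sum_congr rfl fun k _ => ?_
          ring_nf
      _ = ∑ k, ∑ m, (cM k j * cM⁻¹ m k) • u m := Finset.sum_comm
      _ = ∑ k, cM k j • w k := by
          refine Finset.sum_congr rfl fun k _ => ?_
          rw [hw, Finset.smul_sum]
          refine Finset.sum_congr rfl fun m _ => ?_
          rw [smul_smul]
  have hspan_uw : Submodule.span ℝ (Set.range u) = Submodule.span ℝ (Set.range w) := by
    apply le_antisymm
    · rw [Submodule.span_le]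
      rintro _ ⟨j, rfl⟩
      rw [hu_eq j]
      exact Submodule.sum_smul_mem _ _ fun k _ => Submodule.subset_span ⟨k, rfl⟩
    · rw [Submodule.span_le]
      rintro _ ⟨j, rfl⟩
      rw [hw]
      exact Submodule.sum_smul_mem _ _ fun k _ => Submodule.subset_span ⟨k, rfl⟩
  -- scaled iterates
  set x : ℕ → Fin N → H := fun n j => ((lam (j : ℕ)) ^ n)⁻¹ • (T ^ n) (w j) with hx
  have hlam_ne : ∀ (n : ℕ) (j : Fin N), (lam (j : ℕ)) ^ n ≠ 0 :=
    fun n j => pow_ne_zero n (hpos _).ne'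
  have hUspan : ∀ n, U n = Submodule.span ℝ (Set.range (x n)) := by
    intro n
    have h1 : U n = Submodule.map ((T ^ n : H →L[ℝ] H) : H →ₗ[ℝ] H) (Submodule.span ℝ (Set.range u)) := by
      rw [hU n, Submodule.map_span, ← Set.range_comp]; rfl
    have h2 : Submodule.map ((T ^ n : H →L[ℝ] H) : H →ₗ[ℝ] H) (Submodule.span ℝ (Set.range w))
        = Submodule.span ℝ (Set.range fun j => (T ^ n) (w j)) := by
      rw [Submodule.map_span, ← Set.range_comp]; rfl
    rw [h1, hspan_uw, h2]
    apply le_antisymm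
    · rw [Submodule.span_le]
      rintro _ ⟨j, rfl⟩
      have heq : (T ^ n) (w j) = ((lam (j : ℕ)) ^ n) • x n j := by
        rw [hx]
        rw [smul_smul, mul_inv_cancel₀ (hlam_ne n j), one_smul]
      show (T ^ n) (w j) ∈ _
      rw [heq]
      exact Submodule.smul_mem _ _ (Submodule.subset_span ⟨j, rfl⟩)
    · rw [Submodule.span_le]
      rintro _ ⟨j, rfl⟩
      show ((lam (j : ℕ)) ^ n)⁻¹ • (T ^ n) (w j) ∈ _
      exact Submodule.smul_mem _ _ (Submodule.subset_span ⟨j, rfl⟩)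
  -- spectral analysis
  have hinner_T : ∀ (i : ℕ) (v : H), ⟪φ i, T v⟫ = lam i * ⟪φ i, v⟫ := by
    intro i v
    rw [← hsa, heig i, real_inner_smul_left]
  have hinner_pow : ∀ (n : ℕ) (i : ℕ) (v : H), ⟪φ i, (T ^ n) v⟫ = lam i ^ n * ⟪φ i, v⟫ := by
    intro n
    induction n with
    | zero => intro i v; simp
    | succ n ih =>
      intro i v
      rw [pow_succ, ContinuousLinearMap.mul_apply, ih i (T v), hinner_T i v, pow_succ]
      ring
  have hTn_eig : ∀ (n : ℕ) (i : ℕ), (T ^ n) (φ i) = lam i ^ n • φ i := by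
    intro n i
    induction n with
    | zero => simp
    | succ n ih =>
      rw [pow_succ, ContinuousLinearMap.mul_apply, heig i, map_smul, ih, smul_smul, pow_succ]
      ring_nf
  have hnorm_sq : ∀ v : H, ‖v‖ ^ 2 = ∑' i, ⟪φ i, v⟫ ^ 2 := by
    intro v
    calc ‖v‖ ^ 2 = ⟪v, v⟫ := (real_inner_self_eq_norm_sq v).symm
      _ = ∑' i, ⟪v, φ i⟫ * ⟪φ i, v⟫ := (φ.tsum_inner_mul_inner v v).symm
      _ = ∑' i, ⟪φ i, v⟫ ^ 2 := tsum_congr fun i => by rw [real_inner_comm]; ring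
  have hsummable : ∀ v : H, Summable fun i => ⟪φ i, v⟫ ^ 2 := fun v =>
    (φ.summable_inner_mul_inner v v).congr fun i => by rw [real_inner_comm]; ring
  have htail : ∀ (n : ℕ) (z : H), (∀ i : ℕ, i < N → ⟪φ i, z⟫ = 0) →
      ‖(T ^ n) z‖ ≤ lam N ^ n * ‖z‖ := by
    intro n z hz
    have h1 : ‖(T ^ n) z‖ ^ 2 ≤ (lam N ^ n) ^ 2 * ‖z‖ ^ 2 := by
      rw [hnorm_sq, hnorm_sq, ← tsum_mul_left]
      apply Summable.tsum_le_tsum _ (hsummable ((T ^ n) z)) ((hsummable z).mul_left _)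
      intro i
      rw [hinner_pow n i z]
      by_cases hi : i < N
      · rw [hz i hi]
        have h00 : (lam i ^ n * 0 : ℝ) ^ 2 = 0 := by ring
        rw [h00]
        positivity
      · push_neg at hi
        have hle : lam i ^ n ≤ lam N ^ n :=
          pow_le_pow_left₀ (hpos i).le (hmono hi) n
        rw [mul_pow]
        have h0 : (0:ℝ) ≤ lam i ^ n := (pow_pos (hpos i) n).le
        exact mul_le_mul_of_nonneg_right (pow_le_pow_left₀ h0 hle 2) (sq_nonneg _)
    have h2 : (0:ℝ) ≤ lam N ^ n * ‖z‖ := mul_nonneg (pow_pos (hpos N) n).le (norm_nonneg z)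
    nlinarith [norm_nonneg ((T ^ n) z)]
  -- orthogonality of the error vectors
  set z : Fin N → H := fun j => w j - φ (j : ℕ) with hzdef
  have hz_orth : ∀ (j : Fin N) (i : ℕ), i < N → ⟪φ i, z j⟫ = 0 := by
    intro j i hi
    have hif : ⟪φ i, w j⟫ = if (⟨i, hi⟩ : Fin N) = j then 1 else 0 := by
      rw [real_inner_comm]
      exact hwinner j ⟨i, hi⟩
    have hff : ⟪φ i, φ ((j : ℕ))⟫ = if i = (j : ℕ) then 1 else 0 :=
      orthonormal_iff_ite.mp φ.orthonormal i (j : ℕ)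
    rw [hzdef]
    simp only [inner_sub_right, hif, hff]
    have : ((⟨i, hi⟩ : Fin N) = j) ↔ (i = (j : ℕ)) := by
      constructor
      · intro h; exact congrArg Fin.val h ▸ rfl
      · intro h; exact Fin.ext h
    rcases em (i = (j : ℕ)) with h | h
    · rw [if_pos h, if_pos (this.2 h)]; ring
    · rw [if_neg h, if_neg (fun hh => h (this.1 hh))]; ring
  -- quantitative error bound
  set r : ℝ := lam N / lam (N - 1) with hrdef
  have hr0 : 0 ≤ r := div_nonneg (hpos N).le (hpos (N - 1)).le
  have hr1 : r < 1 := (div_lt_one (hpos (N - 1))).2 hgap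
  set C : ℝ := ∑ j, ‖z j‖ with hCdef
  have hC0 : 0 ≤ C := Finset.sum_nonneg fun j _ => norm_nonneg _
  have hzC : ∀ j, ‖z j‖ ≤ C := fun j =>
    Finset.single_le_sum (fun k _ => norm_nonneg (z k)) (Finset.mem_univ j)
  have hx_err : ∀ (n : ℕ) (j : Fin N), ‖x n j - φ (j : ℕ)‖ ≤ C * r ^ n := by
    intro n j
    have hwj : w j = φ (j : ℕ) + z j := by rw [hzdef]; abel_nf; simp
    have hdiff : x n j - φ (j : ℕ) = ((lam (j : ℕ)) ^ n)⁻¹ • (T ^ n) (z j) := by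
      show ((lam (j : ℕ)) ^ n)⁻¹ • (T ^ n) (w j) - φ (j : ℕ) = _
      rw [hwj, map_add, hTn_eig n (j : ℕ), smul_add, smul_smul,
        inv_mul_cancel₀ (hlam_ne n j), one_smul, add_sub_cancel_left]
    rw [hdiff, norm_smul]
    have hnorm : ‖(T ^ n) (z j)‖ ≤ lam N ^ n * ‖z j‖ := htail n (z j) (hz_orth j)
    have hpow : 0 < lam (j : ℕ) ^ n := pow_pos (hpos _) n
    have habs : ‖((lam (j : ℕ)) ^ n)⁻¹‖ = ((lam (j : ℕ)) ^ n)⁻¹ := by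
      rw [Real.norm_eq_abs, abs_of_pos (inv_pos.2 hpow)]
    rw [habs]
    calc ((lam (j : ℕ)) ^ n)⁻¹ * ‖(T ^ n) (z j)‖
        ≤ ((lam (j : ℕ)) ^ n)⁻¹ * (lam N ^ n * ‖z j‖) :=
          mul_le_mul_of_nonneg_left hnorm (inv_pos.2 hpow).le
      _ = (lam N / lam (j : ℕ)) ^ n * ‖z j‖ := by
          rw [div_pow, div_eq_mul_inv]; ring
      _ ≤ r ^ n * ‖z j‖ := by
          apply mul_le_mul_of_nonneg_right _ (norm_nonneg _)
          apply pow_le_pow_left₀ (div_nonneg (hpos N).le (hpos _).le)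
          exact div_le_div_of_nonneg_left (hpos N).le (hpos (N - 1))
            (hmono (Nat.le_pred_of_lt j.isLt))
      _ ≤ r ^ n * C := mul_le_mul_of_nonneg_left (hzC j) (pow_nonneg hr0 n)
      _ = C * r ^ n := mul_comm _ _
  -- the limit orthonormal family
  have hforth : Orthonormal ℝ (fun j : Fin N => φ (j : ℕ)) :=
    φ.orthonormal.comp _ Fin.val_injective
  -- assemble
  rw [tendsto_iff_norm_sub_tendsto_zero]
  have htend : Tendsto (fun n : ℕ => Real.sqrt N * (C * r ^ n)) atTop (nhds 0) := by
    have h := (tendsto_pow_atTop_nhds_zero_of_lt_one hr0 hr1).const_mul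
      (Real.sqrt (N : ℝ) * C)
    rw [mul_zero] at h
    exact h.congr fun n => by ring
  have hbound : Tendsto (fun n : ℕ => 4 * (Real.sqrt N * (C * r ^ n))) atTop (nhds 0) := by
    have h := htend.const_mul (4 : ℝ)
    rw [mul_zero] at h
    exact h
  apply squeeze_zero' (Filter.Eventually.of_forall fun n => norm_nonneg _) _ hbound
  have hsmall_ev : ∀ᶠ n in atTop, Real.sqrt N * (C * r ^ n) ≤ 1 / 2 :=
    (htend.eventually_lt_const (by norm_num : (0:ℝ) < 1 / 2)).mono fun n hn => hn.le
  filter_upwards [hsmall_ev] with n hn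
  haveI i1 : FiniteDimensional ℝ (Submodule.span ℝ (Set.range (x n))) :=
    FiniteDimensional.span_of_finite ℝ (Set.finite_range _)
  haveI i2 : FiniteDimensional ℝ
      (Submodule.span ℝ (Set.range fun j : Fin N => φ (j : ℕ))) :=
    FiniteDimensional.span_of_finite ℝ (Set.finite_range _)
  have heq1 : orthProjCLM (U n) (hUfd n)
      = orthProjCLM (Submodule.span ℝ (Set.range (x n))) i1 :=
    orthProjCLM_congr (hUspan n) _ _
  have heq2 : orthProjCLM V hVfd
      = orthProjCLM (Submodule.span ℝ (Set.range fun j : Fin N => φ (j : ℕ))) i2 :=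
    orthProjCLM_congr hV _ _
  rw [heq1, heq2]
  have hε0 : (0:ℝ) ≤ C * r ^ n := mul_nonneg hC0 (pow_nonneg hr0 n)
  exact geometry hforth hε0 (fun j => hx_err n j) hn
end

section
/- Let a be a bounded coercive symmetric bilinear form on a Hilbert space H, and let l₁, …, l_N ∈ H be linearly independent. Define W = ∩ⱼ ker⟨lⱼ, ·⟩ and let A : H → H be the bounded invertible operator with ⟨Au, v⟩ = a(u, v) (Lax–Milgram). Then the a-orthogonal complement of W, namely Ũ := {u ∈ H : a(u, w) = 0 ∀w ∈ W}, equals span{A⁻¹l₁, …, A⁻¹l_N}, and dim Ũ = N. -/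
open scoped RealInnerProductSpace

/-- the `a`-orthogonal complement of `W = ∩ⱼ ker⟨lⱼ,·⟩` equals
`A⁻¹ span{l₁,…,l_N}` (the preimage of the span under the Lax–Milgram operator
`A`), and it has dimension `N`. -/
theorem stmt_14 {H : Type*} [NormedAddCommGroup H] [InnerProductSpace ℝ H] [CompleteSpace H]
    (a : H →ₗ[ℝ] H →ₗ[ℝ] ℝ) (hsymm : ∀ u v : H, a u v = a v u)
    (M : ℝ) (hbound : ∀ u v : H, |a u v| ≤ M * ‖u‖ * ‖v‖)
    (α : ℝ) (hα : 0 < α) (hcoer : ∀ v : H, α * ‖v‖ ^ 2 ≤ a v v)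
    (A : H →L[ℝ] H) (hA : ∀ u v : H, ⟪A u, v⟫ = a u v) (hAbij : Function.Bijective A)
    (N : ℕ) (l : Fin N → H) (hli : LinearIndependent ℝ l)
    (W : Submodule ℝ H)
    (hW : ∀ v : H, v ∈ W ↔ ∀ j : Fin N, ⟪l j, v⟫ = 0) :
    (∀ u : H, (∀ w ∈ W, a u w = 0) ↔
      u ∈ Submodule.comap (A : H →ₗ[ℝ] H) (Submodule.span ℝ (Set.range l))) ∧
    Module.finrank ℝ
      (Submodule.comap (A : H →ₗ[ℝ] H) (Submodule.span ℝ (Set.range l))) = N := by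
  set S : Submodule ℝ H := Submodule.span ℝ (Set.range l) with hS
  have hfin : FiniteDimensional ℝ S := FiniteDimensional.span_of_finite ℝ (Set.finite_range l)
  -- W = Sᗮ
  have hWS : W = Sᗮ := by
    ext v
    rw [hW, Submodule.mem_orthogonal]
    constructor
    · intro h x hx
      induction hx using Submodule.span_induction with
      | mem x hx => obtain ⟨j, rfl⟩ := hx; exact h j
      | zero => simp
      | add x y _ _ hx hy => rw [inner_add_left, hx, hy]; ring
      | smul c x _ hx => rw [inner_smul_left, hx]; simp
    · intro h j
      exact h (l j) (Submodule.subset_span ⟨j, rfl⟩)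
  constructor
  · intro u
    have : (∀ w ∈ W, a u w = 0) ↔ A u ∈ Wᗮ := by
      rw [Submodule.mem_orthogonal']
      constructor
      · intro h w hw; rw [hA]; exact h w hw
      · intro h w hw; rw [← hA]; exact h w hw
    rw [this, hWS, Submodule.orthogonal_orthogonal]
    rfl
  · let e : H ≃ₗ[ℝ] H := LinearEquiv.ofBijective (A : H →ₗ[ℝ] H) hAbij
    have hApp : ∀ x : H, e x = A x := fun x => rfl
    have hc : Submodule.comap (A : H →ₗ[ℝ] H) S =
        Submodule.map (e.symm : H →ₗ[ℝ] H) S := by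
      ext x
      simp only [Submodule.mem_comap, Submodule.mem_map, LinearEquiv.coe_coe]
      constructor
      · intro hx
        exact ⟨A x, hx, by rw [← hApp, LinearEquiv.symm_apply_apply]⟩
      · rintro ⟨y, hy, rfl⟩
        show (A : H →ₗ[ℝ] H) (e.symm y) ∈ S
        rw [show (A : H →ₗ[ℝ] H) (e.symm y) = e (e.symm y) from (hApp _).symm,
          LinearEquiv.apply_symm_apply]
        exact hy
    rw [hc, LinearEquiv.finrank_map_eq e.symm S, finrank_span_eq_card hli, Fintype.card_fin]
end
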